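/- arXiv:2505.13412 — 6 statements merged into one kernel-verified Lean document; each statement's English description precedes it below -/
import Mathlib

section
/- Let I ⊆ ℤ² be a finite spread and let z₁, ..., zₙ be its minimal elements ordered by increasing y-coordinate. Then for every i with 1 ≤ i < n, the join zᵢ ∨ zᵢ₊₁ (componentwise maximum) belongs to I. -/
/-- A subset of a poset is poset-convex. -/
def PosetConvex {α : Type*} [Preorder α] (S : Set α) : Prop :=
  ∀ ⦃x y z : α⦄, x ≤ y → y ≤ z → x ∈ S → z ∈ S → y ∈ S

/-- A subset of a poset is poset-connected: nonempty, and any two of its elements are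
joined by a finite zigzag of comparable elements staying in the set. -/
def PosetConnected {α : Type*} [Preorder α] (S : Set α) : Prop :=
  S.Nonempty ∧ ∀ x ∈ S, ∀ y ∈ S, ∃ (n : ℕ) (c : ℕ → α), c 0 = x ∧ c n = y ∧
    (∀ i ≤ n, c i ∈ S) ∧ ∀ i < n, c i ≤ c (i + 1) ∨ c (i + 1) ≤ c i

/-!
Every element of a finite spread `I` lies above a minimal element, and since `z, z'` are
consecutive minima, that minimal element sits weakly below `z` or weakly above `z'` in the
`y`-order. This splits `I` between two up-sets, one containing `z` and one containing `z'`;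
a zigzag from `z` to `z'` inside `I` must pass through a point `w` of both. Then `w` dominates
`(z.1, z'.2) = z ⊔ z'`, and convexity between `z` and `w` puts the join in `I`.
-/

theorem PosetConnected.exists_mem_inter_of_isUpperSet {α : Type*} [Preorder α]
    {S A B : Set α} (hS : PosetConnected S) (hA : IsUpperSet A) (hB : IsUpperSet B)
    (hcover : S ⊆ A ∪ B) {x y : α} (hx : x ∈ S) (hxA : x ∈ A) (hy : y ∈ S) (hyB : y ∈ B) :
    ∃ w ∈ S, w ∈ A ∧ w ∈ B := by
  obtain ⟨n, c, rfl, rfl, hmem, hstep⟩ := hS.2 x hx y hy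
  suffices ∀ i ≤ n, c i ∈ B → ∃ w ∈ S, w ∈ A ∧ w ∈ B from this n le_rfl hyB
  intro i
  induction i with
  | zero => exact fun _ h0B => ⟨c 0, hx, hxA, h0B⟩
  | succ k ih =>
    intro hk hkB
    by_cases hB_k : c k ∈ B
    · exact ih (k.le_succ.trans hk) hB_k
    · have hA_k : c k ∈ A := (hcover (hmem k (k.le_succ.trans hk))).resolve_right hB_k
      rcases hstep k hk with hle | hge
      · exact ⟨c (k + 1), hmem (k + 1) hk, hA hle hA_k, hkB⟩
      · exact absurd (hB hge hkB) hB_k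

theorem Minimal.fst_le_fst_of_snd_le_snd {α β : Type*} [LinearOrder α] [Preorder β]
    {S : Set (α × β)} {a b : α × β} (hb : Minimal (· ∈ S) b) (ha : a ∈ S) (h : a.2 ≤ b.2) :
    b.1 ≤ a.1 :=
  le_of_not_gt fun hlt => (hb.2 ha ⟨hlt.le, h⟩).1.not_gt hlt

/-- **Joins of consecutive minima of a finite spread lie in the spread.**
Let `I ⊆ ℤ²` (product order) be a finite spread, and let `z, z'` be minimal
elements of `I` that are consecutive in the `y`-ordering of the minimal elements
(i.e. `z.2 < z'.2` and no minimal element of `I` has `y`-coordinate strictly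
between them).  Then the componentwise join `z ⊔ z'` belongs to `I`. -/
theorem stmt4 (I : Set (ℤ × ℤ)) (hfin : I.Finite)
    (hconv : PosetConvex I) (hconn : PosetConnected I)
    (z z' : ℤ × ℤ)
    (hz : z ∈ I) (hzmin : ∀ w ∈ I, w ≤ z → w = z)
    (hz' : z' ∈ I) (hz'min : ∀ w ∈ I, w ≤ z' → w = z')
    (hlt : z.2 < z'.2)
    (hconsec : ∀ w ∈ I, (∀ v ∈ I, v ≤ w → v = w) → ¬(z.2 < w.2 ∧ w.2 < z'.2)) :
    z ⊔ z' ∈ I := by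
  have hzm : Minimal (· ∈ I) z := ⟨hz, fun w hw hwz => (hzmin w hw hwz).ge⟩
  have hz'm : Minimal (· ∈ I) z' := ⟨hz', fun w hw hwz => (hz'min w hw hwz).ge⟩
  set L := upperClosure {m | Minimal (· ∈ I) m ∧ m.2 ≤ z.2}
  set R := upperClosure {m | Minimal (· ∈ I) m ∧ z'.2 ≤ m.2}
  have hcover : I ⊆ L ∪ R := by
    intro w hw
    obtain ⟨m, hmw, hm⟩ := hfin.exists_le_minimal hw
    rcases le_or_gt m.2 z.2 with hle | hgt
    · exact Or.inl ⟨m, ⟨hm, hle⟩, hmw⟩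
    · have hm' : ∀ v ∈ I, v ≤ m → v = m := fun v hv hvm => le_antisymm hvm (hm.2 hv hvm)
      exact Or.inr ⟨m, ⟨hm, not_lt.1 fun hlt' => hconsec m hm.1 hm' ⟨hgt, hlt'⟩⟩, hmw⟩
  obtain ⟨w, hw, ⟨m, ⟨hm, hmz⟩, hmw⟩, ⟨m', ⟨-, hm'z'⟩, hm'w⟩⟩ :=
    hconn.exists_mem_inter_of_isUpperSet L.upper R.upper hcover hz
      (subset_upperClosure ⟨hzm, le_rfl⟩) hz' (subset_upperClosure ⟨hz'm, le_rfl⟩)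
  have hzw : z ≤ w :=
    ⟨(hzm.fst_le_fst_of_snd_le_snd hm.1 hmz).trans hmw.1, hlt.le.trans (hm'z'.trans hm'w.2)⟩
  have hz'w : z' ≤ w :=
    ⟨(hz'm.fst_le_fst_of_snd_le_snd hz hlt.le).trans hzw.1, hm'z'.trans hm'w.2⟩
  exact hconv le_sup_left (sup_le hzw hz'w) hz hw
end

section
/- Let I ⊆ ℤ² be a finite spread. Define ∂⁻I = {a ∈ I : a - (1,1) ∉ I}. Then ∂⁻I is poset-connected in ℤ². -/
/-! Slide each point `a` of `I` down the diagonal, `a - (k, k)`, until just before it leaves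
`I`; since `I` is finite this ends at a point of `∂⁻I = lowerBoundary I`, the foot of `a`.
Two points one unit step apart have comparable feet, whatever the lengths of their slides.
By convexity, comparable points of `I` are joined by unit steps inside `I`, so a zigzag in `I`
between two points of `∂⁻I` projects to a zigzag of feet in `∂⁻I`; and each point of `∂⁻I`
lies above its own foot. -/

open Relation

section Zigzag

variable {α β : Type*}

theorem Relation.reflTransGen_iff_exists_seq {r : α → α → Prop} {x y : α} :
    ReflTransGen r x y ↔
      ∃ (n : ℕ) (c : ℕ → α), c 0 = x ∧ c n = y ∧ ∀ i < n, r (c i) (c (i + 1)) := by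
  constructor
  · intro h
    induction h with
    | refl => exact ⟨0, fun _ => x, rfl, rfl, by simp⟩
    | @tail b z _ hbz ih =>
      obtain ⟨n, c, h0, hn, hc⟩ := ih
      refine ⟨n + 1, fun i => if i ≤ n then c i else z, by simp [h0], by simp, fun i hi => ?_⟩
      obtain hi | rfl := Nat.lt_succ_iff_lt_or_eq.mp hi
      · simpa [hi.le, Nat.succ_le_of_lt hi] using hc i hi
      · simpa [hn] using hbz
  · rintro ⟨n, c, rfl, rfl, hc⟩
    induction n with
    | zero => rfl
    | succ n ih => exact (ih fun i hi => hc i (by omega)).tail (hc n n.lt_succ_self)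

def ComparableIn [Preorder α] (S : Set α) (a b : α) : Prop :=
  a ∈ S ∧ b ∈ S ∧ SymmGen (· ≤ ·) a b

instance [Preorder α] (S : Set α) : Std.Symm (ComparableIn S) where
  symm _ _ := fun ⟨ha, hb, hab⟩ => ⟨hb, ha, hab.symm⟩

theorem posetConnected_iff_reflTransGen [Preorder α] {S : Set α} :
    PosetConnected S ↔ S.Nonempty ∧ ∀ x ∈ S, ∀ y ∈ S, ReflTransGen (ComparableIn S) x y := by
  simp only [PosetConnected, reflTransGen_iff_exists_seq]
  refine and_congr_right fun _ => forall₂_congr fun x _ => forall₂_congr fun y hy => ?_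
  refine exists_congr fun n => exists_congr fun c =>
    and_congr_right fun _ => and_congr_right fun hn => ⟨?_, ?_⟩
  · rintro ⟨hmem, hcomp⟩ i hi
    exact ⟨hmem i hi.le, hmem (i + 1) hi, hcomp i hi⟩
  · intro h
    refine ⟨fun i hi => ?_, fun i hi => (h i hi).2.2⟩
    obtain hi | rfl := hi.lt_or_eq
    · exact (h i hi).1
    · exact hn ▸ hy

theorem PosetConvex.reflTransGen_covBy [PartialOrder α] [LocallyFiniteOrder α] {S : Set α}
    (hS : PosetConvex S) {a b : α} (ha : a ∈ S) (hb : b ∈ S) (hab : a ≤ b) :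
    ReflTransGen (fun c d => c ∈ S ∧ d ∈ S ∧ c ⋖ d) a b := by
  have mem : ∀ c, a ≤ c → ReflTransGen (· ⋖ ·) c b → c ∈ S := fun c hac hcb =>
    hS hac (le_iff_reflTransGen_covBy.mpr hcb) ha hb
  suffices ∀ c, ReflTransGen (· ⋖ ·) c b → a ≤ c →
      ReflTransGen (fun c d => c ∈ S ∧ d ∈ S ∧ c ⋖ d) c b from
    this a (le_iff_reflTransGen_covBy.mp hab) le_rfl
  intro c hcb
  induction hcb using ReflTransGen.head_induction_on with
  | refl => exact fun _ => .refl
  | head hcd hdb ih =>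
    intro hac
    have had := hac.trans hcd.le
    exact .head ⟨mem _ hac (.head hcd hdb), mem _ had hdb, hcd⟩ (ih had)

theorem PosetConvex.reflTransGen_map [PartialOrder α] [LocallyFiniteOrder α] [Preorder β]
    {S : Set α} {T : Set β} {f : α → β} (hS : PosetConvex S) (hf : Set.MapsTo f S T)
    (hcov : ∀ a b, a ⋖ b → SymmGen (· ≤ ·) (f a) (f b)) {a b : α} (h : ComparableIn S a b) :
    ReflTransGen (ComparableIn T) (f a) (f b) := by
  have up : ∀ {a b}, a ∈ S → b ∈ S → a ≤ b → ReflTransGen (ComparableIn T) (f a) (f b) :=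
    fun ha hb hab => (hS.reflTransGen_covBy ha hb hab).lift f
      fun c d ⟨hc, hd, hcd⟩ => ⟨hf hc, hf hd, hcov c d hcd⟩
  obtain ⟨ha, hb, hab | hba⟩ := h
  · exact up ha hb hab
  · exact symm (up hb ha hba)

end Zigzag

def lowerBoundary (I : Set (ℤ × ℤ)) : Set (ℤ × ℤ) :=
  {a | a ∈ I ∧ a - (1, 1) ∉ I}

theorem symmGen_sub_diag_of_covBy {a b : ℤ × ℤ} (h : a ⋖ b) (m n : ℤ) :
    SymmGen (· ≤ ·) (a - (m, m)) (b - (n, n)) := by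
  rw [Prod.covBy_iff, Order.covBy_iff_add_one_eq, Order.covBy_iff_add_one_eq] at h
  simp only [SymmGen, Prod.le_def, Prod.fst_sub, Prod.snd_sub]
  omega

theorem Set.Finite.exists_sub_diag_mem_lowerBoundary {I : Set (ℤ × ℤ)} (hI : I.Finite)
    {a : ℤ × ℤ} (ha : a ∈ I) : ∃ k : ℕ, a - ((k, k) : ℤ × ℤ) ∈ lowerBoundary I := by
  by_contra! h
  have diag_mem : ∀ k : ℕ, a - ((k, k) : ℤ × ℤ) ∈ I := by
    intro k
    induction k with
    | zero => simpa [← Prod.zero_eq_mk] using ha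
    | succ k ih =>
      have step : a - ((k, k) : ℤ × ℤ) - (1, 1) ∈ I := by
        simpa [lowerBoundary, ih] using h k
      convert step using 1
      ext <;> simp <;> ring
  exact Set.infinite_of_injective_forall_mem (fun k l hkl => by simpa using hkl) diag_mem hI

/-- **The lower boundary of a finite spread is poset-connected.**
For a finite spread `I ⊆ ℤ²` (product order), the set
`∂⁻I = {a ∈ I : a - (1,1) ∉ I}` is poset-connected. -/
theorem stmt6 (I : Set (ℤ × ℤ)) (hfin : I.Finite)
    (hconv : PosetConvex I) (hconn : PosetConnected I) :
    PosetConnected {a : ℤ × ℤ | a ∈ I ∧ a - (1, 1) ∉ I} := by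
  change PosetConnected (lowerBoundary I)
  choose! k hk using fun a (ha : a ∈ I) => hfin.exists_sub_diag_mem_lowerBoundary ha
  set foot : ℤ × ℤ → ℤ × ℤ := fun a => a - ((k a, k a) : ℤ × ℤ)
  have to_foot : ∀ a ∈ lowerBoundary I,
      ReflTransGen (ComparableIn (lowerBoundary I)) a (foot a) := fun a ha =>
    .single ⟨ha, hk a ha.1, .of_ge (by simp [foot, Prod.le_def])⟩
  rw [posetConnected_iff_reflTransGen] at hconn ⊢
  obtain ⟨⟨a, ha⟩, hI⟩ := hconn
  refine ⟨⟨foot a, hk a ha⟩, fun x hx y hy => ?_⟩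
  have feet : ReflTransGen (ComparableIn (lowerBoundary I)) (foot x) (foot y) :=
    (hI x hx.1 y hy.1).lift' foot fun _ _ h =>
      hconv.reflTransGen_map hk (fun _ _ h => symmGen_sub_diag_of_covBy h _ _) h
  exact (to_foot x hx).trans (feet.trans (symm (to_foot y hy)))
end

section
/- Let I ⊆ ℤ² be a finite spread curve (a spread such that p ∈ I implies p + (1,1) ∉ I), with minimal elements z₁, ..., zₙ ordered by increasing y-coordinate. If p ∈ I and p ≠ zᵢ ∨ zᵢ₊₁ for all 1 ≤ i < n, then there exists a unique index i with zᵢ ≤ p. -/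
theorem minimal_mem_iff_forall_le_imp_eq {α : Type*} [PartialOrder α] {s : Set α} {z : α} :
    Minimal (· ∈ s) z ↔ z ∈ s ∧ ∀ w ∈ s, w ≤ z → w = z :=
  ⟨fun hz ↦ ⟨hz.prop, fun _ ↦ hz.eq_of_le⟩,
    fun hz ↦ minimal_mem_iff.2 ⟨hz.1, fun w hw hle ↦ (hz.2 w hw hle).symm⟩⟩

section MinimalProd

variable {α β : Type*} [LinearOrder α] [LinearOrder β] {s : Set (α × β)} {z w : α × β}

theorem Minimal.fst_lt_of_snd_lt (hw : Minimal (· ∈ s) w) (hz : z ∈ s) (h : z.2 < w.2) :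
    w.1 < z.1 := by
  by_contra! h'
  exact h.ne (congrArg Prod.snd (hw.eq_of_le hz ⟨h', h.le⟩))

theorem Minimal.eq_of_snd_eq (hz : Minimal (· ∈ s) z) (hw : Minimal (· ∈ s) w)
    (h : z.2 = w.2) : z = w := by
  rcases le_total z.1 w.1 with h1 | h1
  · exact hw.eq_of_le hz.prop ⟨h1, h.le⟩
  · exact (hz.eq_of_le hw.prop ⟨h1, h.ge⟩).symm

theorem exists_consecutive_minimal_le (hfin : s.Finite) {z' p : α × β}
    (hz : Minimal (· ∈ s) z) (hz' : Minimal (· ∈ s) z') (hzp : z ≤ p) (hz'p : z' ≤ p)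
    (h : z.2 < z'.2) :
    ∃ w, Minimal (· ∈ s) w ∧ w ≤ p ∧ z.2 < w.2 ∧
      ∀ v, Minimal (· ∈ s) v → ¬(z.2 < v.2 ∧ v.2 < w.2) := by
  set S := {w | Minimal (· ∈ s) w ∧ w ≤ p ∧ z.2 < w.2}
  have hSfin : S.Finite := hfin.subset fun _ hw ↦ hw.1.prop
  obtain ⟨w, ⟨hw, hwp, hzw⟩, hwleast⟩ :=
    S.exists_min_image Prod.snd hSfin ⟨z', hz', hz'p, h⟩
  refine ⟨w, hw, hwp, hzw, fun v hv ⟨hzv, hvw⟩ ↦ ?_⟩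
  have hvp : v ≤ p := ⟨(hv.fst_lt_of_snd_lt hz.prop hzv).le.trans hzp.1, hvw.le.trans hwp.2⟩
  exact (hwleast v ⟨hv, hvp, hzv⟩).not_gt hvw

end MinimalProd

section SpreadCurve

variable {I : Set (ℤ × ℤ)}

theorem PosetConvex.not_snd_lt_of_fst_lt (hconv : PosetConvex I)
    (hcurve : ∀ p ∈ I, p + (1, 1) ∉ I) {a b : ℤ × ℤ} (ha : a ∈ I) (hb : b ∈ I)
    (h1 : a.1 < b.1) : ¬a.2 < b.2 := fun h2 ↦
  hcurve a ha <| hconv (y := a + (1, 1)) (by simp [Prod.le_def])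
    (by simp only [Prod.le_def, Prod.fst_add, Prod.snd_add]; omega) ha hb

theorem PosetConvex.eq_sup_of_sup_le (hconv : PosetConvex I)
    (hcurve : ∀ p ∈ I, p + (1, 1) ∉ I) {z z' p : ℤ × ℤ} (hz : z ∈ I) (hz' : z' ∈ I)
    (hp : p ∈ I) (h1 : z'.1 < z.1) (h2 : z.2 < z'.2) (hle : z ⊔ z' ≤ p) : p = z ⊔ z' := by
  have hsup : z ⊔ z' = (z.1, z'.2) := Prod.ext (max_eq_left h1.le) (max_eq_right h2.le)
  rw [hsup] at hle ⊢
  obtain ⟨hp1, hp2⟩ : z.1 ≤ p.1 ∧ z'.2 ≤ p.2 := hle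
  rcases hp1.lt_or_eq with hp1 | hp1
  · exact absurd (h2.trans_le hp2) (hconv.not_snd_lt_of_fst_lt hcurve hz hp hp1)
  rcases hp2.lt_or_eq with hp2 | hp2
  · exact absurd hp2 (hconv.not_snd_lt_of_fst_lt hcurve hz' hp (h1.trans_le hp1.le))
  exact Prod.ext hp1.symm hp2.symm

end SpreadCurve

theorem stmt7_general (I : Set (ℤ × ℤ)) (hfin : I.Finite)
    (hconv : PosetConvex I)
    (hcurve : ∀ p ∈ I, p + (1, 1) ∉ I)
    (p : ℤ × ℤ) (hp : p ∈ I)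
    (hnotjoin : ∀ z z' : ℤ × ℤ, z ∈ I → (∀ w ∈ I, w ≤ z → w = z) →
      z' ∈ I → (∀ w ∈ I, w ≤ z' → w = z') → z.2 < z'.2 →
      (∀ w ∈ I, (∀ v ∈ I, v ≤ w → v = w) → ¬(z.2 < w.2 ∧ w.2 < z'.2)) →
      p ≠ z ⊔ z') :
    ∃! z : ℤ × ℤ, (z ∈ I ∧ ∀ w ∈ I, w ≤ z → w = z) ∧ z ≤ p := by
  have unique_of_lt : ∀ z z', Minimal (· ∈ I) z → Minimal (· ∈ I) z' → z ≤ p → z' ≤ p →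
      ¬z.2 < z'.2 := by
    intro z z' hz hz' hzp hz'p h
    obtain ⟨w, hw, hwp, hzw, hconsec⟩ :=
      exists_consecutive_minimal_le hfin hz hz' hzp hz'p h
    refine hnotjoin z w hz.prop (fun _ ↦ hz.eq_of_le) hw.prop (fun _ ↦ hw.eq_of_le) hzw
      (fun v hv hvmin ↦ hconsec v (minimal_mem_iff_forall_le_imp_eq.2 ⟨hv, hvmin⟩)) ?_
    exact hconv.eq_sup_of_sup_le hcurve hz.prop hw.prop hp (hw.fst_lt_of_snd_lt hz.prop hzw) hzw
      (sup_le hzp hwp)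
  obtain ⟨z, hzp, hz⟩ := hfin.isPWO.exists_le_minimal hp
  refine ⟨z, ⟨minimal_mem_iff_forall_le_imp_eq.1 hz, hzp⟩, fun z' ⟨hz', hz'p⟩ ↦ ?_⟩
  rw [← minimal_mem_iff_forall_le_imp_eq] at hz'
  rcases lt_trichotomy z'.2 z.2 with h | h | h
  · exact absurd h (unique_of_lt z' z hz' hz hz'p hzp)
  · exact hz'.eq_of_snd_eq hz h
  · exact absurd h (unique_of_lt z z' hz hz' hzp hz'p)

/-- **Unique minimum below a point of a finite spread curve avoiding joins of
consecutive minima.**  Let `I ⊆ ℤ²` be a finite spread curve (a spread such that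
`p ∈ I` implies `p + (1,1) ∉ I`).  If `p ∈ I` is not the join of any two minima of `I`
that are consecutive in the `y`-ordering, then there is a unique minimal element `z`
of `I` with `z ≤ p`. -/
theorem stmt7 (I : Set (ℤ × ℤ)) (hfin : I.Finite)
    (hconv : PosetConvex I) (hconn : PosetConnected I)
    (hcurve : ∀ p ∈ I, p + (1, 1) ∉ I)
    (p : ℤ × ℤ) (hp : p ∈ I)
    (hnotjoin : ∀ z z' : ℤ × ℤ, z ∈ I → (∀ w ∈ I, w ≤ z → w = z) →
      z' ∈ I → (∀ w ∈ I, w ≤ z' → w = z') → z.2 < z'.2 →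
      (∀ w ∈ I, (∀ v ∈ I, v ≤ w → v = w) → ¬(z.2 < w.2 ∧ w.2 < z'.2)) →
      p ≠ z ⊔ z') :
    ∃! z : ℤ × ℤ, (z ∈ I ∧ ∀ w ∈ I, w ≤ z → w = z) ∧ z ≤ p :=
  stmt7_general I hfin hconv hcurve p hp hnotjoin
end

section
/- Let M and M' be finite-dimensional graded k[z]-modules. If there exists an injective graded module homomorphism M → M', or a surjective graded module homomorphism M' → M, then the bar-count satisfies N¹(M) ≤ N¹(M'). -/
open Module LinearMap

/-- **Monotonicity of the bar-count under injections and surjections.**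
Let `M` and `M'` be finite-dimensional graded `k[z]`-modules (internal gradings
`ℬ`, `ℬ'` with the `z`-actions shifting the grading by one).  If there exists an
injective graded module homomorphism `M → M'`, or a surjective graded module
homomorphism `M' → M`, then the bar-counts satisfy
`N¹(M) = dim M - dim zM ≤ dim M' - dim z'M' = N¹(M')`. -/
theorem stmt14 {k M M' : Type*} [Field k]
    [AddCommGroup M] [Module k M] [FiniteDimensional k M]
    [AddCommGroup M'] [Module k M'] [FiniteDimensional k M']
    (z : M →ₗ[k] M) (z' : M' →ₗ[k] M')
    (ℬ : ℤ → Submodule k M) (hinternal : DirectSum.IsInternal ℬ)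
    (hz : ∀ (i : ℤ), ∀ m ∈ ℬ i, z m ∈ ℬ (i + 1))
    (ℬ' : ℤ → Submodule k M') (hinternal' : DirectSum.IsInternal ℬ')
    (hz' : ∀ (i : ℤ), ∀ m ∈ ℬ' i, z' m ∈ ℬ' (i + 1))
    (h : (∃ φ : M →ₗ[k] M', Function.Injective φ ∧ φ ∘ₗ z = z' ∘ₗ φ ∧
            ∀ (i : ℤ), ∀ m ∈ ℬ i, φ m ∈ ℬ' i) ∨
         (∃ ψ : M' →ₗ[k] M, Function.Surjective ψ ∧ ψ ∘ₗ z' = z ∘ₗ ψ ∧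
            ∀ (i : ℤ), ∀ m ∈ ℬ' i, ψ m ∈ ℬ i)) :
    (finrank k M : ℤ) - finrank k (LinearMap.range z)
      ≤ (finrank k M' : ℤ) - finrank k (LinearMap.range z') := by
  have e1 := LinearMap.finrank_range_add_finrank_ker z
  have e2 := LinearMap.finrank_range_add_finrank_ker z'
  have key : finrank k (LinearMap.ker z) ≤ finrank k (LinearMap.ker z') := by
    rcases h with ⟨φ, hinj, hcomm, -⟩ | ⟨ψ, hsurj, hcomm, -⟩
    · -- φ restricts to an injection ker z → ker z'
      have hres : ∀ x ∈ LinearMap.ker z, φ x ∈ LinearMap.ker z' := by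
        intro x hx
        have := congrArg (· x) hcomm
        simp only [LinearMap.comp_apply] at this ⊢
        rw [LinearMap.mem_ker] at hx ⊢
        rw [← this, hx, map_zero]
      exact LinearMap.finrank_le_finrank_of_injective
        (f := φ.restrict hres)
        (fun a b hab => Subtype.ext (hinj (congrArg Subtype.val hab)))
    · -- quotient argument transported to kernels via rank-nullity
      have hle : LinearMap.range z' ≤ LinearMap.ker ((LinearMap.range z).mkQ ∘ₗ ψ) := by
        rintro _ ⟨x, rfl⟩
        have := congrArg (· x) hcomm
        simp only [LinearMap.comp_apply] at this
        simp [this, Submodule.Quotient.mk_eq_zero]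
      set f := (LinearMap.range z').liftQ _ hle
      have hfs : Function.Surjective f := by
        intro y
        obtain ⟨x, rfl⟩ := (LinearMap.range z).mkQ_surjective y
        obtain ⟨x', rfl⟩ := hsurj x
        exact ⟨Submodule.Quotient.mk x', rfl⟩
      have h1 := Submodule.finrank_quotient_add_finrank (LinearMap.range z)
      have h2 := Submodule.finrank_quotient_add_finrank (LinearMap.range z')
      have h3 : finrank k (M ⧸ LinearMap.range z) ≤ finrank k (M' ⧸ LinearMap.range z') := by
        have := LinearMap.finrank_range_le f
        rwa [LinearMap.range_eq_top.mpr hfs, finrank_top] at this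
      omega
  omega
end

section
/- Let M be a finite-dimensional bigraded k[x,y]-module and let ℓ : ℤ → ℤ² be an injective monotonic map. Then N²(M) ≥ N¹(ℓ*M), where ℓ*M is the pullback one-parameter module and N¹ is the bar-count. In particular, N²(M) ≥ dim M_i for every i ∈ ℤ². -/
/-!
Write `N²(V) = ∑ᵢ s(i)` with `s(i) = dim Vᵢ - rk(i → i+e₁) - rk(i → i+e₂) + rk(i → i+e₁+e₂)` and
`N¹(ℓ*V) = ∑ⱼ null(ℓ j → ℓ (j+1))`. Nullity is subadditive along composites, so each step of `ℓ`
is bounded by the nullities of the unit steps of a staircase going up from `ℓ j` and then right to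
`ℓ (j+1)`. Below the staircase, `s(i) = null(i → i+e₂) - (rk(i → i+e₁) - rk(i → i+e₁+e₂))`, and the
subtracted term is at most `null(i+e₁ → i+e₁+e₂)`; moving right stays below the staircase and
never lands on a vertical step, so the sum of `s` below the staircase dominates the nullities of
the vertical steps. Symmetrically, the sum above it dominates the horizontal steps. For the
pointwise bound, take for `ℓ` a horizontal line through `i` whose next point leaves the support.
-/

open Module LinearMap

lemma le_add_nonneg_pair (i : ℤ × ℤ) (a b : ℤ) (ha : 0 ≤ a) (hb : 0 ≤ b) :
    i ≤ i + (a, b) := by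
  rw [Prod.le_def]
  constructor <;> simp only [Prod.fst_add, Prod.snd_add] <;> omega

open Finset

theorem LinearMap.finrank_le_finrank_map_add_finrank_ker {k M N : Type*} [Field k]
    [AddCommGroup M] [Module k M] [AddCommGroup N] [Module k N] [FiniteDimensional k M]
    (g : M →ₗ[k] N) (p : Submodule k M) :
    finrank k p ≤ finrank k (p.map g) + finrank k (ker g) := by
  have := (g.domRestrict p).finrank_range_add_finrank_ker
  rw [range_domRestrict, ker_domRestrict] at this
  have hker : finrank k ((ker g).comap p.subtype) ≤ finrank k (ker g) := by
    rw [(Submodule.equivMapOfInjective _ p.injective_subtype _).finrank_eq,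
      Submodule.map_comap_subtype]
    exact Submodule.finrank_mono inf_le_right
  omega

section Preorder

variable {k ι : Type*} [Field k] [Preorder ι] {V : ι → Type*}
  [∀ i, AddCommGroup (V i)] [∀ i, Module k (V i)] (f : ∀ i j : ι, i ≤ j → (V i →ₗ[k] V j))

open Classical in
noncomputable def mapRank (i j : ι) : ℕ :=
  if h : i ≤ j then finrank k (range (f i j h)) else 0

open Classical in
noncomputable def mapNullity (i j : ι) : ℕ :=
  if h : i ≤ j then finrank k (ker (f i j h)) else 0

/-- `N¹(ℓ*V)`, the bar count of the pullback of `V` along `ℓ`. -/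
noncomputable def barCount (ℓ : ℤ → ι) (hℓ : Monotone ℓ) : ℤ :=
  ∑ᶠ j : ℤ, ((finrank k (V (ℓ j)) : ℤ)
    - finrank k (range (f (ℓ j) (ℓ (j + 1)) (hℓ (Int.le_add_one le_rfl)))))

theorem mapRank_of_le {i j : ι} (h : i ≤ j) : mapRank f i j = finrank k (range (f i j h)) :=
  dif_pos h

theorem mapNullity_of_le {i j : ι} (h : i ≤ j) :
    mapNullity f i j = finrank k (ker (f i j h)) :=
  dif_pos h

variable (hid : ∀ i, f i i le_rfl = LinearMap.id)
  (hcomp : ∀ (i j l : ι) (hij : i ≤ j) (hjl : j ≤ l),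
    f i l (hij.trans hjl) = (f j l hjl) ∘ₗ (f i j hij))

include hid in
theorem mapNullity_self (i : ι) : mapNullity f i i = 0 := by
  rw [mapNullity_of_le f le_rfl, hid, ker_id, finrank_bot]

variable [∀ i, FiniteDimensional k (V i)]

theorem mapRank_add_mapNullity {i j : ι} (h : i ≤ j) :
    mapRank f i j + mapNullity f i j = finrank k (V i) := by
  rw [mapRank_of_le f h, mapNullity_of_le f h]
  exact finrank_range_add_finrank_ker _

theorem mapRank_le_finrank_source (i j : ι) : mapRank f i j ≤ finrank k (V i) := by
  unfold mapRank; split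
  · exact finrank_range_le _
  · exact Nat.zero_le _

theorem mapRank_le_finrank_target (i j : ι) : mapRank f i j ≤ finrank k (V j) := by
  unfold mapRank; split
  · exact Submodule.finrank_le _
  · exact Nat.zero_le _

theorem mapNullity_le_finrank_source (i j : ι) : mapNullity f i j ≤ finrank k (V i) := by
  unfold mapNullity; split
  · exact Submodule.finrank_le _
  · exact Nat.zero_le _

include hcomp in
theorem mapRank_le_mapRank_add_mapNullity {i j l : ι} (hij : i ≤ j) (hjl : j ≤ l) :
    mapRank f i j ≤ mapRank f i l + mapNullity f j l := by
  rw [mapRank_of_le f (hij.trans hjl), mapRank_of_le f hij, mapNullity_of_le f hjl,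
    hcomp i j l hij hjl, range_comp]
  exact finrank_le_finrank_map_add_finrank_ker _ _

include hcomp in
theorem mapNullity_le_add {i j l : ι} (hij : i ≤ j) (hjl : j ≤ l) :
    mapNullity f i l ≤ mapNullity f i j + mapNullity f j l := by
  have := mapRank_add_mapNullity f hij
  have := mapRank_add_mapNullity f (hij.trans hjl)
  have := mapRank_le_mapRank_add_mapNullity f hcomp hij hjl
  omega

include hid hcomp in
theorem mapNullity_le_sum_Ico {x : ℤ → ι} (hx : Monotone x) {a b : ℤ} (hab : a ≤ b) :
    mapNullity f (x a) (x b) ≤ ∑ t ∈ Ico a b, mapNullity f (x t) (x (t + 1)) := by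
  induction b, hab using Int.leInduction with
  | base => simp [mapNullity_self f hid]
  | succ b hab ih =>
    rw [← sum_Ico_add_eq_sum_Ico_add_one hab]
    have := mapNullity_le_add f hcomp (hx hab) (hx (Int.le_add_one le_rfl))
    omega

theorem barCount_eq_sum {ℓ : ℤ → ι} (hℓ : Monotone ℓ) (hinj : Function.Injective ℓ)
    (S : Finset ι) (hS : ∀ i ∉ S, finrank k (V i) = 0) :
    barCount f ℓ hℓ = ∑ j ∈ S.preimage ℓ hinj.injOn, (mapNullity f (ℓ j) (ℓ (j + 1)) : ℤ) := by
  have hterm : ∀ j, ((finrank k (V (ℓ j)) : ℤ)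
      - finrank k (range (f (ℓ j) (ℓ (j + 1)) (hℓ (Int.le_add_one le_rfl)))))
      = mapNullity f (ℓ j) (ℓ (j + 1)) := fun j => by
    rw [← mapRank_of_le, ← mapRank_add_mapNullity f (hℓ (Int.le_add_one le_rfl))]
    push_cast; ring
  unfold barCount
  rw [finsum_eq_sum_of_support_subset _ (s := S.preimage ℓ hinj.injOn)]
  · exact sum_congr rfl fun j _ => hterm j
  · intro j hj
    by_contra hjS
    have := mapNullity_le_finrank_source f (ℓ j) (ℓ (j + 1))
    have := hS _ (by simpa using hjS)
    rw [Function.mem_support, hterm] at hj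
    omega

theorem mapNullity_le_barCount {ℓ : ℤ → ι} (hℓ : Monotone ℓ) (hinj : Function.Injective ℓ)
    (S : Finset ι) (hS : ∀ i ∉ S, finrank k (V i) = 0) (j₀ : ℤ) :
    (mapNullity f (ℓ j₀) (ℓ (j₀ + 1)) : ℤ) ≤ barCount f ℓ hℓ := by
  rw [barCount_eq_sum f hℓ hinj S hS]
  by_cases h : ℓ j₀ ∈ S
  · exact single_le_sum (fun j _ => Nat.cast_nonneg (α := ℤ) _) (mem_preimage.2 h)
  · have := mapNullity_le_finrank_source f (ℓ j₀) (ℓ (j₀ + 1))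
    have := hS _ h
    rw [show (mapNullity f (ℓ j₀) (ℓ (j₀ + 1)) : ℤ) = 0 by omega]
    exact sum_nonneg fun j _ => Nat.cast_nonneg (α := ℤ) _

end Preorder

section OrderedGroup

variable {k ι : Type*} [Field k] [AddCommGroup ι] [PartialOrder ι]
  {V : ι → Type*} [∀ i, AddCommGroup (V i)] [∀ i, Module k (V i)]
  (f : ∀ i j : ι, i ≤ j → (V i →ₗ[k] V j))

noncomputable def squareCount (u v i : ι) : ℤ :=
  finrank k (V i) - mapRank f i (i + u) - mapRank f i (i + v) + mapRank f i (i + (u + v))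

theorem squareCount_comm (u v i : ι) : squareCount f u v i = squareCount f v u i := by
  rw [squareCount, squareCount, add_comm u v]
  ring

variable [IsOrderedAddMonoid ι] [∀ i, FiniteDimensional k (V i)]

theorem squareCount_eq {u v : ι} (hu : 0 ≤ u) (i : ι) :
    squareCount f u v i
      = mapNullity f i (i + u) - mapRank f i (i + v) + mapRank f i (i + v + u) := by
  have := mapRank_add_mapNullity f (le_add_of_nonneg_right hu : i ≤ i + u)
  rw [squareCount, add_comm u v, ← add_assoc]
  omega

variable (hcomp : ∀ (i j l : ι) (hij : i ≤ j) (hjl : j ≤ l),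
    f i l (hij.trans hjl) = (f j l hjl) ∘ₗ (f i j hij))

include hcomp in
/-- In `squareCount f u v i = nullity(i → i + u) - (rank(i → i + v) - rank(i → i + v + u))` the
subtracted term is at most the nullity at `i + v`, a point of `A` outside `H`. -/
theorem sum_mapNullity_le_sum_squareCount {u v : ι} (hu : 0 ≤ u) (hv : 0 ≤ v)
    (A H : Finset ι) (hH : ∀ p ∈ H, finrank k (V p) ≠ 0 → p ∈ A)
    (hA : ∀ i ∈ A, finrank k (V (i + v)) ≠ 0 → i + v ∈ A ∧ i + v ∉ H) :
    ∑ p ∈ H, (mapNullity f p (p + u) : ℤ) ≤ ∑ i ∈ A, squareCount f u v i := by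
  classical
  have hvanish : ∀ p, mapNullity f p (p + u) ≠ 0 → finrank k (V p) ≠ 0 := fun p hp => by
    have := mapNullity_le_finrank_source f p (p + u)
    omega
  have hH' : ∑ p ∈ H, mapNullity f p (p + u) ≤ ∑ p ∈ A with p ∈ H, mapNullity f p (p + u) :=
    sum_le_sum_of_ne_zero fun p hp hne => mem_filter.2 ⟨hH p hp (hvanish p hne), hp⟩
  have hshift : ∑ i ∈ A, mapNullity f (i + v) (i + v + u)
      ≤ ∑ p ∈ A with p ∉ H, mapNullity f p (p + u) := by
    rw [← sum_image (f := fun p => mapNullity f p (p + u)) (add_left_injective v).injOn]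
    refine sum_le_sum_of_ne_zero fun p hp hne => ?_
    obtain ⟨i, hi, rfl⟩ := mem_image.1 hp
    exact mem_filter.2 (hA i hi (hvanish _ hne))
  have hdrop : ∑ i ∈ A, mapRank f i (i + v)
      ≤ ∑ i ∈ A, mapRank f i (i + v + u) + ∑ i ∈ A, mapNullity f (i + v) (i + v + u) := by
    rw [← sum_add_distrib]
    exact sum_le_sum fun i _ => mapRank_le_mapRank_add_mapNullity f hcomp
      (le_add_of_nonneg_right hv) (le_add_of_nonneg_right hu)
  have hsplit := sum_filter_add_sum_filter_not A (· ∈ H) (fun p => mapNullity f p (p + u))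
  simp only [squareCount_eq f hu, sum_add_distrib, sum_sub_distrib]
  zify at hH' hshift hdrop hsplit
  linarith

end OrderedGroup

section Staircase

variable (ℓ : ℤ → ℤ × ℤ)

/-- The staircase from `ℓ j` to `ℓ (j + 1)` goes up the column `(ℓ j).1`, then right along the
row `(ℓ (j + 1)).2`; `stairRise ℓ j` and `stairRun ℓ j` are the source points of its unit steps. -/
noncomputable def stairRise (j : ℤ) : Finset (ℤ × ℤ) := {(ℓ j).1} ×ˢ Ico (ℓ j).2 (ℓ (j + 1)).2

noncomputable def stairRun (j : ℤ) : Finset (ℤ × ℤ) :=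
  Ico (ℓ j).1 (ℓ (j + 1)).1 ×ˢ {(ℓ (j + 1)).2}

def BelowStairs (i : ℤ × ℤ) : Prop := ∃ j, (ℓ j).1 ≤ i.1 ∧ i.2 < (ℓ (j + 1)).2

variable {ℓ}

theorem mem_stairRise {j : ℤ} {p : ℤ × ℤ} :
    p ∈ stairRise ℓ j ↔ p.1 = (ℓ j).1 ∧ (ℓ j).2 ≤ p.2 ∧ p.2 < (ℓ (j + 1)).2 := by
  rw [stairRise, mem_product, mem_singleton, mem_Ico]

theorem mem_stairRun {j : ℤ} {p : ℤ × ℤ} :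
    p ∈ stairRun ℓ j ↔ (ℓ j).1 ≤ p.1 ∧ p.1 < (ℓ (j + 1)).1 ∧ p.2 = (ℓ (j + 1)).2 := by
  rw [stairRun, mem_product, mem_singleton, mem_Ico, and_assoc]

theorem BelowStairs.add_right {i : ℤ × ℤ} (h : BelowStairs ℓ i) :
    BelowStairs ℓ (i + (1, 0)) := by
  obtain ⟨j, h1, h2⟩ := h
  exact ⟨j, by simp only [Prod.fst_add]; omega, by simpa using h2⟩

theorem BelowStairs.of_add_up {i : ℤ × ℤ} (h : BelowStairs ℓ (i + (0, 1))) :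
    BelowStairs ℓ i := by
  obtain ⟨j, h1, h2⟩ := h
  exact ⟨j, by simpa using h1, by simp only [Prod.snd_add] at h2; omega⟩

theorem belowStairs_of_mem_stairRise {j : ℤ} {p : ℤ × ℤ} (h : p ∈ stairRise ℓ j) :
    BelowStairs ℓ p := by
  rw [mem_stairRise] at h
  exact ⟨j, h.1.ge, h.2.2⟩

theorem belowStairs_of_add_up_mem_stairRun {j : ℤ} {i : ℤ × ℤ}
    (h : i + (0, 1) ∈ stairRun ℓ j) : BelowStairs ℓ i := by
  simp only [mem_stairRun, Prod.fst_add, Prod.snd_add] at h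
  exact ⟨j, by omega, by omega⟩

variable (hmono : Monotone ℓ)
include hmono

theorem not_belowStairs_of_mem_stairRun {j : ℤ} {p : ℤ × ℤ} (h : p ∈ stairRun ℓ j) :
    ¬ BelowStairs ℓ p := by
  rw [mem_stairRun] at h
  rintro ⟨j', hx, hy⟩
  rcases le_or_gt j' j with hle | hlt
  · have := (hmono (show j' + 1 ≤ j + 1 by omega)).2
    omega
  · have := (hmono (show j + 1 ≤ j' by omega)).1
    omega

theorem add_right_notMem_stairRise {i : ℤ × ℤ} (h : BelowStairs ℓ i) (j : ℤ) :
    i + (1, 0) ∉ stairRise ℓ j := by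
  obtain ⟨j', hx, hy⟩ := h
  simp only [mem_stairRise, Prod.fst_add, Prod.snd_add, not_and, not_lt]
  intro h1 h2
  rcases le_or_gt j j' with hle | hlt
  · have := (hmono hle).1
    omega
  · have := (hmono (show j' + 1 ≤ j by omega)).2
    omega

theorem pairwiseDisjoint_stairRise (T : Finset ℤ) :
    (T : Set ℤ).PairwiseDisjoint (stairRise ℓ) := by
  intro a _ b _ hab
  refine disjoint_left.2 fun p hpa hpb => ?_
  rw [mem_stairRise] at hpa hpb
  rcases lt_or_gt_of_ne hab with hlt | hlt
  · have := (hmono (show a + 1 ≤ b by omega)).2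
    omega
  · have := (hmono (show b + 1 ≤ a by omega)).2
    omega

theorem pairwiseDisjoint_stairRun (T : Finset ℤ) :
    (T : Set ℤ).PairwiseDisjoint (stairRun ℓ) := by
  intro a _ b _ hab
  refine disjoint_left.2 fun p hpa hpb => ?_
  rw [mem_stairRun] at hpa hpb
  rcases lt_or_gt_of_ne hab with hlt | hlt
  · have := (hmono (show a + 1 ≤ b by omega)).1
    omega
  · have := (hmono (show b + 1 ≤ a by omega)).1
    omega

end Staircase

section Bigraded

variable {k : Type*} [Field k] {V : ℤ × ℤ → Type*} [∀ i, AddCommGroup (V i)]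
  [∀ i, Module k (V i)] [∀ i, FiniteDimensional k (V i)]
  (f : ∀ i j : ℤ × ℤ, i ≤ j → (V i →ₗ[k] V j))

/-- `N²(V) = dim V - dim xV - dim yV + dim xyV`, computed degreewise. -/
noncomputable def twoParameterCount : ℤ :=
  ∑ᶠ i : ℤ × ℤ, ((finrank k (V i) : ℤ)
    - finrank k (range (f i (i + (1, 0)) (le_add_nonneg_pair i 1 0 zero_le_one le_rfl)))
    - finrank k (range (f i (i + (0, 1)) (le_add_nonneg_pair i 0 1 le_rfl zero_le_one)))
    + finrank k (range (f i (i + (1, 1)) (le_add_nonneg_pair i 1 1 zero_le_one zero_le_one))))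

theorem twoParameterCount_eq_sum (S : Finset (ℤ × ℤ)) (hS : ∀ i ∉ S, finrank k (V i) = 0) :
    twoParameterCount f = ∑ i ∈ S, squareCount f (1, 0) (0, 1) i := by
  have hterm : ∀ i, ((finrank k (V i) : ℤ)
      - finrank k (range (f i (i + (1, 0)) (le_add_nonneg_pair i 1 0 zero_le_one le_rfl)))
      - finrank k (range (f i (i + (0, 1)) (le_add_nonneg_pair i 0 1 le_rfl zero_le_one)))
      + finrank k (range (f i (i + (1, 1)) (le_add_nonneg_pair i 1 1 zero_le_one zero_le_one))))
      = squareCount f (1, 0) (0, 1) i := fun i => by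
    rw [squareCount, ← mapRank_of_le, ← mapRank_of_le, ← mapRank_of_le]
    rfl
  unfold twoParameterCount
  rw [finsum_eq_sum_of_support_subset _ (s := S)]
  · exact sum_congr rfl fun i _ => hterm i
  · intro i hi
    by_contra hiS
    rw [Function.mem_support, hterm, squareCount] at hi
    have := mapRank_le_finrank_source f i (i + (1, 0))
    have := mapRank_le_finrank_source f i (i + (0, 1))
    have := mapRank_le_finrank_source f i (i + ((1, 0) + (0, 1)))
    have := hS i hiS
    omega

variable (hid : ∀ i, f i i le_rfl = LinearMap.id)
  (hcomp : ∀ (i j l : ℤ × ℤ) (hij : i ≤ j) (hjl : j ≤ l),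
    f i l (hij.trans hjl) = (f j l hjl) ∘ₗ (f i j hij))

include hid hcomp in
theorem mapNullity_le_sum_stairRise_add_sum_stairRun {ℓ : ℤ → ℤ × ℤ} (hmono : Monotone ℓ)
    (j : ℤ) :
    mapNullity f (ℓ j) (ℓ (j + 1))
      ≤ ∑ p ∈ stairRise ℓ j, mapNullity f p (p + (0, 1))
        + ∑ p ∈ stairRun ℓ j, mapNullity f p (p + (1, 0)) := by
  have hstep : ℓ j ≤ ℓ (j + 1) := hmono (Int.le_add_one le_rfl)
  have hrise : mapNullity f (ℓ j) ((ℓ j).1, (ℓ (j + 1)).2)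
      ≤ ∑ p ∈ stairRise ℓ j, mapNullity f p (p + (0, 1)) := by
    have := mapNullity_le_sum_Ico f hid hcomp (x := fun t => ((ℓ j).1, t))
      (fun a b hab => Prod.mk_le_mk.2 ⟨le_rfl, hab⟩) hstep.2
    simpa [stairRise, sum_product] using this
  have hrun : mapNullity f ((ℓ j).1, (ℓ (j + 1)).2) (ℓ (j + 1))
      ≤ ∑ p ∈ stairRun ℓ j, mapNullity f p (p + (1, 0)) := by
    have := mapNullity_le_sum_Ico f hid hcomp (x := fun t => (t, (ℓ (j + 1)).2))
      (fun a b hab => Prod.mk_le_mk.2 ⟨hab, le_rfl⟩) hstep.1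
    simpa [stairRun, sum_product] using this
  have := mapNullity_le_add f hcomp (i := ℓ j) (l := ℓ (j + 1))
    (Prod.mk_le_mk.2 ⟨le_rfl, hstep.2⟩) (Prod.mk_le_mk.2 ⟨hstep.1, le_rfl⟩)
  omega

include hid hcomp in
theorem sum_mapNullity_le_sum_stairRise_add_sum_stairRun {ℓ : ℤ → ℤ × ℤ}
    (hmono : Monotone ℓ) (T : Finset ℤ) :
    ∑ j ∈ T, mapNullity f (ℓ j) (ℓ (j + 1))
      ≤ ∑ p ∈ T.biUnion (stairRise ℓ), mapNullity f p (p + (0, 1))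
        + ∑ p ∈ T.biUnion (stairRun ℓ), mapNullity f p (p + (1, 0)) := by
  rw [sum_biUnion (pairwiseDisjoint_stairRise hmono T),
    sum_biUnion (pairwiseDisjoint_stairRun hmono T), ← sum_add_distrib]
  exact sum_le_sum fun j _ => mapNullity_le_sum_stairRise_add_sum_stairRun f hid hcomp hmono j

open Classical in
include hcomp in
theorem sum_stairRise_le_sum_squareCount {ℓ : ℤ → ℤ × ℤ} (hmono : Monotone ℓ) (T : Finset ℤ)
    (S : Finset (ℤ × ℤ)) (hS : ∀ i ∉ S, finrank k (V i) = 0) :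
    ∑ p ∈ T.biUnion (stairRise ℓ), (mapNullity f p (p + (0, 1)) : ℤ)
      ≤ ∑ i ∈ S with BelowStairs ℓ i, squareCount f (1, 0) (0, 1) i := by
  simp_rw [squareCount_comm f (1, 0) (0, 1)]
  refine sum_mapNullity_le_sum_squareCount f hcomp (by decide) (by decide) _ _ ?_ ?_
  · intro p hp hne
    obtain ⟨j, -, hpj⟩ := mem_biUnion.1 hp
    exact mem_filter.2 ⟨by_contra fun hpS => hne (hS p hpS),
      belowStairs_of_mem_stairRise hpj⟩
  · intro i hi hne
    obtain ⟨-, hbelow⟩ := mem_filter.1 hi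
    refine ⟨mem_filter.2 ⟨by_contra fun hS' => hne (hS _ hS'), hbelow.add_right⟩, ?_⟩
    simp only [mem_biUnion, not_exists, not_and]
    exact fun j _ => add_right_notMem_stairRise hmono hbelow j

open Classical in
include hcomp in
theorem sum_stairRun_le_sum_squareCount {ℓ : ℤ → ℤ × ℤ} (hmono : Monotone ℓ) (T : Finset ℤ)
    (S : Finset (ℤ × ℤ)) (hS : ∀ i ∉ S, finrank k (V i) = 0) :
    ∑ p ∈ T.biUnion (stairRun ℓ), (mapNullity f p (p + (1, 0)) : ℤ)
      ≤ ∑ i ∈ S with ¬ BelowStairs ℓ i, squareCount f (1, 0) (0, 1) i := by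
  refine sum_mapNullity_le_sum_squareCount f hcomp (by decide) (by decide) _ _ ?_ ?_
  · intro p hp hne
    obtain ⟨j, -, hpj⟩ := mem_biUnion.1 hp
    exact mem_filter.2 ⟨by_contra fun hpS => hne (hS p hpS),
      not_belowStairs_of_mem_stairRun hmono hpj⟩
  · intro i hi hne
    obtain ⟨-, hnot⟩ := mem_filter.1 hi
    refine ⟨mem_filter.2 ⟨by_contra fun hS' => hne (hS _ hS'),
      fun h => hnot h.of_add_up⟩, ?_⟩
    simp only [mem_biUnion, not_exists, not_and]
    exact fun j _ hj => hnot (belowStairs_of_add_up_mem_stairRun hj)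

include hid hcomp in
theorem barCount_le_twoParameterCount (S : Finset (ℤ × ℤ)) (hS : ∀ i ∉ S, finrank k (V i) = 0)
    {ℓ : ℤ → ℤ × ℤ} (hmono : Monotone ℓ) (hinj : Function.Injective ℓ) :
    barCount f ℓ hmono ≤ twoParameterCount f := by
  classical
  set T := S.preimage ℓ hinj.injOn
  have hstairs := sum_mapNullity_le_sum_stairRise_add_sum_stairRun f hid hcomp hmono T
  have hrise := sum_stairRise_le_sum_squareCount f hcomp hmono T S hS
  have hrun := sum_stairRun_le_sum_squareCount f hcomp hmono T S hS
  rw [barCount_eq_sum f hmono hinj S hS, twoParameterCount_eq_sum f S hS,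
    ← sum_filter_add_sum_filter_not S (BelowStairs ℓ)]
  zify at hstairs
  linarith

include hid hcomp in
/-- Pull back along a line in direction `(1, 0)` through `i₀`, scaled so that `ℓ 1` leaves `S`:
the bar through `i₀` then has length one and `N¹` sees all of `V i₀`. -/
theorem finrank_le_twoParameterCount (S : Finset (ℤ × ℤ)) (hS : ∀ i ∉ S, finrank k (V i) = 0)
    (i₀ : ℤ × ℤ) : (finrank k (V i₀) : ℤ) ≤ twoParameterCount f := by
  obtain ⟨c, hc, hcS⟩ : ∃ c ∈ Set.Ioi (0 : ℤ), c ∉ S.image (fun p => p.1 - i₀.1) :=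
    (Set.Ioi_infinite 0).exists_notMem_finset _
  set ℓ : ℤ → ℤ × ℤ := fun j => i₀ + (j * c, 0)
  have hmono : Monotone ℓ := fun a b hab =>
    add_le_add_right (Prod.mk_le_mk.2 ⟨mul_le_mul_of_nonneg_right hab (le_of_lt hc), le_rfl⟩) _
  have hinj : Function.Injective ℓ := fun a b hab =>
    mul_right_cancel₀ (ne_of_gt hc) (by simpa [ℓ] using congrArg Prod.fst hab)
  have hℓ1 : finrank k (V (ℓ (0 + 1))) = 0 :=
    hS _ fun h => hcS (mem_image.2 ⟨_, h, by simp [ℓ]⟩)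
  have hℓ0 : ℓ 0 = i₀ := by simp [ℓ]
  calc (finrank k (V i₀) : ℤ) = finrank k (V (ℓ 0)) := by rw [hℓ0]
    _ = mapNullity f (ℓ 0) (ℓ (0 + 1)) := by
        have := mapRank_add_mapNullity f (hmono (Int.le_add_one (le_refl 0)))
        have := mapRank_le_finrank_target f (ℓ 0) (ℓ (0 + 1))
        omega
    _ ≤ barCount f ℓ hmono := mapNullity_le_barCount f hmono hinj S hS 0
    _ ≤ twoParameterCount f := barCount_le_twoParameterCount f hid hcomp S hS hmono hinj

end Bigraded

/-- **Slice monotonicity of the two-parameter count, and the pointwise-dimension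
bound.**
Let `V` (with structure maps `f`) be a pointwise finite-dimensional representation of
`ℤ²` with finite support (contained in the finite set `S`), i.e. a finite-dimensional
bigraded `k[x,y]`-module, and let `ℓ : ℤ → ℤ²` be an injective monotonic map.  Then
`N²(V) ≥ N¹(ℓ*V)`, where
`N²(V) = dim V - dim xV - dim yV + dim xyV` is computed gradewise as the sum over all
grades `i` of `dim V_i` minus the ranks of the structure maps to `i+(1,0)` and
`i+(0,1)` plus the rank of the structure map to `i+(1,1)`, and
`N¹(ℓ*V) = dim ℓ*V - dim z·ℓ*V` is the bar-count of the pullback one-parameter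
module.  In particular, `N²(V) ≥ dim V_i` for every `i ∈ ℤ²`. -/
theorem stmt17 {k : Type*} [Field k] (V : ℤ × ℤ → Type*)
    [∀ i, AddCommGroup (V i)] [∀ i, Module k (V i)] [∀ i, FiniteDimensional k (V i)]
    (f : ∀ i j : ℤ × ℤ, i ≤ j → (V i →ₗ[k] V j))
    (hid : ∀ i, f i i le_rfl = LinearMap.id)
    (hcomp : ∀ (i j l : ℤ × ℤ) (hij : i ≤ j) (hjl : j ≤ l),
      f i l (hij.trans hjl) = (f j l hjl) ∘ₗ (f i j hij))
    (S : Finset (ℤ × ℤ)) (hS : ∀ i ∉ S, Subsingleton (V i))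
    (ℓ : ℤ → ℤ × ℤ) (hmono : Monotone ℓ) (hinj : Function.Injective ℓ) :
    ((∑ᶠ j : ℤ, ((finrank k (V (ℓ j)) : ℤ)
        - finrank k (LinearMap.range (f (ℓ j) (ℓ (j + 1)) (hmono (by omega))))))
      ≤ ∑ᶠ i : ℤ × ℤ, ((finrank k (V i) : ℤ)
        - finrank k (LinearMap.range (f i (i + (1, 0))
            (le_add_nonneg_pair i 1 0 (by omega) (by omega))))
        - finrank k (LinearMap.range (f i (i + (0, 1))
            (le_add_nonneg_pair i 0 1 (by omega) (by omega))))
        + finrank k (LinearMap.range (f i (i + (1, 1))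
            (le_add_nonneg_pair i 1 1 (by omega) (by omega))))))
    ∧ ∀ i₀ : ℤ × ℤ, (finrank k (V i₀) : ℤ)
      ≤ ∑ᶠ i : ℤ × ℤ, ((finrank k (V i) : ℤ)
        - finrank k (LinearMap.range (f i (i + (1, 0))
            (le_add_nonneg_pair i 1 0 (by omega) (by omega))))
        - finrank k (LinearMap.range (f i (i + (0, 1))
            (le_add_nonneg_pair i 0 1 (by omega) (by omega))))
        + finrank k (LinearMap.range (f i (i + (1, 1))
            (le_add_nonneg_pair i 1 1 (by omega) (by omega))))) := by
  have hS' : ∀ i ∉ S, finrank k (V i) = 0 := fun i hi =>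
    haveI := hS i hi
    finrank_zero_of_subsingleton
  exact ⟨barCount_le_twoParameterCount f hid hcomp S hS' hmono hinj,
    finrank_le_twoParameterCount f hid hcomp S hS'⟩
end

section
/- Let M be a finite-dimensional bigraded k[x,y]-module with N²(M) = dim M - dim xM - dim yM + dim xyM = 0. Then M = 0. -/
open Module LinearMap

/-- **Vanishing of the two-parameter count implies the module vanishes.**
Let `M` be a finite-dimensional bigraded `k[x,y]`-module: internal grading
`ℬ : ℤ² → Submodule k M`, with commuting actions `X`, `Y` of `x` and `y` shifting the
grading by `(1,0)` and `(0,1)`.  If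
`N²(M) = dim M - dim xM - dim yM + dim xyM = 0`, then `M = 0`. -/
theorem stmt18 {k M : Type*} [Field k] [AddCommGroup M] [Module k M]
    [FiniteDimensional k M]
    (X Y : M →ₗ[k] M) (hcomm : X ∘ₗ Y = Y ∘ₗ X)
    (ℬ : ℤ × ℤ → Submodule k M) (hinternal : DirectSum.IsInternal ℬ)
    (hX : ∀ (i : ℤ × ℤ), ∀ m ∈ ℬ i, X m ∈ ℬ (i + (1, 0)))
    (hY : ∀ (i : ℤ × ℤ), ∀ m ∈ ℬ i, Y m ∈ ℬ (i + (0, 1)))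
    (h : (finrank k M : ℤ) - finrank k (LinearMap.range X) - finrank k (LinearMap.range Y)
        + finrank k (LinearMap.range (X ∘ₗ Y)) = 0) :
    ∀ m : M, m = 0 := by
  classical
  -- Step 1 : ker X ≤ range Y
  have hker : LinearMap.ker X ≤ LinearMap.range Y := by
    set f : LinearMap.range Y →ₗ[k] M := X ∘ₗ (LinearMap.range Y).subtype with hf
    have hrange : LinearMap.range f = LinearMap.range (X ∘ₗ Y) := by
      rw [hf, LinearMap.range_comp, Submodule.range_subtype, LinearMap.range_comp]
    have hkerf : Submodule.map (LinearMap.range Y).subtype (LinearMap.ker f)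
        = LinearMap.ker X ⊓ LinearMap.range Y := by
      rw [hf, LinearMap.ker_comp, Submodule.map_comap_subtype, inf_comm]
    have e1 : finrank k (LinearMap.range X) + finrank k (LinearMap.ker X) = finrank k M :=
      LinearMap.finrank_range_add_finrank_ker X
    have e2 : finrank k (LinearMap.range f) + finrank k (LinearMap.ker f)
        = finrank k (LinearMap.range Y) := LinearMap.finrank_range_add_finrank_ker f
    have e3 : finrank k (LinearMap.ker f)
        = finrank k (LinearMap.ker X ⊓ LinearMap.range Y : Submodule k M) := by
      rw [← hkerf, Submodule.finrank_map_subtype_eq]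
    rw [hrange, e3] at e2
    have e4 : finrank k (LinearMap.ker X)
        = finrank k (LinearMap.ker X ⊓ LinearMap.range Y : Submodule k M) := by omega
    have hle : (LinearMap.ker X ⊓ LinearMap.range Y : Submodule k M) = LinearMap.ker X :=
      Submodule.eq_of_le_of_finrank_le inf_le_left (le_of_eq e4)
    exact inf_eq_left.mp hle
  -- Step 2 : homogeneous components of range Y
  have hcomp : ∀ (i : ℤ × ℤ) (m : M), m ∈ ℬ i → m ∈ LinearMap.range Y →
      ∃ n ∈ ℬ (i - (0, 1)), Y n = m := by
    rintro i m him ⟨n, rfl⟩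
    have hn : n ∈ iSup ℬ := by
      rw [hinternal.submodule_iSup_eq_top]; trivial
    rw [Submodule.mem_iSup_iff_exists_finsupp] at hn
    obtain ⟨g, hg, hsum⟩ := hn
    set i₀ : ℤ × ℤ := i - (0, 1) with hi₀
    refine ⟨g i₀, hg i₀, ?_⟩
    have h1 : Y n = ∑ j ∈ insert i₀ g.support, Y (g j) := by
      rw [← hsum, Finsupp.sum, map_sum]
      refine (Finset.sum_insert_of_eq_zero_if_notMem ?_).symm
      intro hni
      rw [Finsupp.notMem_support_iff.mp hni, map_zero]
    have hmem : i₀ ∈ insert i₀ g.support := Finset.mem_insert_self _ _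
    have h2 : Y n - Y (g i₀) ∈ ⨆ (j) (_ : j ≠ i), ℬ j := by
      have heq : Y n - Y (g i₀) = ∑ j ∈ (insert i₀ g.support).erase i₀, Y (g j) := by
        rw [h1, ← Finset.sum_erase_add _ _ hmem, add_sub_cancel_right]
      rw [heq]
      refine Submodule.sum_mem _ fun j hj => ?_
      have hji : j + (0, 1) ≠ i := by
        intro hc
        exact (Finset.ne_of_mem_erase hj) (by rw [hi₀, ← hc]; abel)
      exact Submodule.mem_iSup_of_mem (j + (0, 1))
        (Submodule.mem_iSup_of_mem hji (hY j _ (hg j)))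
    have h3 : Y n - Y (g i₀) ∈ ℬ i := by
      have hmem' : Y (g i₀) ∈ ℬ (i₀ + (0, 1)) := hY i₀ _ (hg i₀)
      have hi : i₀ + (0, 1) = i := by rw [hi₀]; abel
      rw [hi] at hmem'
      exact Submodule.sub_mem _ him hmem'
    have hz := (hinternal.submodule_iSupIndep i).le_bot ⟨h3, h2⟩
    rw [Submodule.mem_bot] at hz
    exact (sub_eq_zero.mp hz).symm
  -- Step 3 : finite support and maximal-degree argument
  intro m
  by_contra hm
  have hSne : ∃ i, ℬ i ≠ ⊥ := by
    by_contra hall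
    push_neg at hall
    have htop : (⊤ : Submodule k M) = ⊥ := by
      rw [← hinternal.submodule_iSup_eq_top]
      simp [hall]
    exact hm ((Submodule.mem_bot k).mp (htop ▸ Submodule.mem_top))
  have hSfin : {i : ℤ × ℤ | ℬ i ≠ ⊥}.Finite :=
    Submodule.finite_ne_bot_of_iSupIndep hinternal.submodule_iSupIndep
  set F : Finset (ℤ × ℤ) := hSfin.toFinset with hF
  have hFmem : ∀ i : ℤ × ℤ, i ∈ F ↔ ℬ i ≠ ⊥ := by
    intro i; rw [hF, Set.Finite.mem_toFinset]; rfl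
  obtain ⟨i₁, hi₁⟩ := hSne
  have hFne : F.Nonempty := ⟨i₁, (hFmem i₁).mpr hi₁⟩
  set F1 : Finset ℤ := F.image Prod.fst with hF1
  have hF1ne : F1.Nonempty := hFne.image _
  set a : ℤ := F1.max' hF1ne with ha
  -- the row a+1 is zero: elements of row a are in ker X
  have hrowker : ∀ c : ℤ, ∀ x ∈ ℬ (a, c), x ∈ LinearMap.ker X := by
    intro c x hx
    have hXx : X x ∈ ℬ ((a, c) + (1, 0)) := hX _ _ hx
    have hb : ℬ ((a, c) + (1, 0)) = ⊥ := by
      by_contra hb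
      have : ((a, c) + (1, 0)) ∈ F := (hFmem _).mpr hb
      have : ((a, c) + (1, 0)).1 ∈ F1 := Finset.mem_image_of_mem _ this
      have hle := F1.le_max' _ this
      simp only [Prod.fst_add] at hle
      omega
    rw [hb, Submodule.mem_bot] at hXx
    exact LinearMap.mem_ker.mpr hXx
  -- second coordinates
  set G : Finset ℤ := F.image Prod.snd with hG
  have hGne : G.Nonempty := hFne.image _
  set b : ℤ := G.min' hGne with hb
  have hbelow : ∀ c : ℤ, c < b → ℬ (a, c) = ⊥ := by
    intro c hc
    by_contra hne
    have h1 : (a, c) ∈ F := (hFmem _).mpr hne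
    have h2 : c ∈ G := Finset.mem_image_of_mem _ h1
    exact absurd (G.min'_le _ h2) (by omega)
  -- kill row a by induction
  have key : ∀ n : ℕ, ∀ c : ℤ, c < b + n → ∀ x ∈ ℬ (a, c), x = 0 := by
    intro n
    induction n with
    | zero =>
      intro c hc x hx
      have hbc := hbelow c (by omega)
      rw [hbc, Submodule.mem_bot] at hx
      exact hx
    | succ n ih =>
      intro c hc x hx
      rcases lt_or_ge c (b + n) with hlt | hge
      · exact ih c hlt x hx
      · have hxr : x ∈ LinearMap.range Y := hker (hrowker c x hx)
        obtain ⟨y, hy, hyx⟩ := hcomp (a, c) x hx hxr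
        have hidx : ((a, c) : ℤ × ℤ) - (0, 1) = (a, c - 1) := by
          ext <;> simp
        rw [hidx] at hy
        have hy0 : y = 0 := ih (c - 1) (by omega) y hy
        rw [hy0, map_zero] at hyx
        exact hyx.symm
  -- contradiction at a point attaining the maximum first coordinate
  obtain ⟨i₂, hi₂F, hi₂eq⟩ := Finset.mem_image.mp (F1.max'_mem hF1ne)
  have hi₂a : i₂ = (a, i₂.2) := by
    ext
    · rw [hi₂eq, ← ha]
    · rfl
  have hne : ℬ (a, i₂.2) ≠ ⊥ := by rw [← hi₂a]; exact (hFmem _).mp hi₂F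
  apply hne
  rw [Submodule.eq_bot_iff]
  intro x hx
  have hcb : b ≤ i₂.2 := G.min'_le _ (Finset.mem_image_of_mem _ hi₂F)
  exact key (i₂.2 - b + 1).toNat i₂.2 (by omega) x hx
end
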